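/- arXiv:2405.08232 — 5 statements merged into one kernel-verified Lean document; each statement's English description precedes it below -/
import Mathlib

section
/- For x, y ∈ ℝ^T with equal coordinate sums, if every partial sum of the sorted-decreasing rearrangement of x is bounded by the corresponding partial sum of the sorted-decreasing rearrangement of y, then the permutahedron Π(x) = ConvexHull{x^π : π ∈ S_T} is contained in Π(y); conversely Π(x) ⊆ Π(y) implies x is majorized by y. -/
open Finset

/-- Fastest-charging profile: `m` for the first `⌊e/m⌋` coordinates,
`e - m⌊e/m⌋` in the next, `0` thereafter (0-based indexing). -/
noncomputable def vProf (T : ℕ) (m e : ℝ) : Fin T → ℝ :=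
  fun t => if ((t : ℕ) : ℤ) < ⌊e / m⌋ then m
    else if ((t : ℕ) : ℤ) = ⌊e / m⌋ then e - m * (⌊e / m⌋ : ℝ)
    else 0

/-- Partial sum of the first `s` coordinates of `x : Fin T → ℝ`. -/
noncomputable def pSum {T : ℕ} (x : Fin T → ℝ) (s : ℕ) : ℝ :=
  ∑ t : Fin T, if (t : ℕ) < s then x t else 0

/-- Permutahedron of `x`: convex hull of all coordinate permutations of `x`. -/
noncomputable def permSet {T : ℕ} (x : Fin T → ℝ) : Set (Fin T → ℝ) :=
  convexHull ℝ {y | ∃ π : Equiv.Perm (Fin T), y = x ∘ π}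

/-!
Both directions are rearrangement arguments. Every vertex `y ∘ π` of `Π(y)` has its `s` chosen
coordinates summing to at most the `s` largest ones of `y`, and this linear inequality passes to
the convex hull; applied to `x ∈ Π(x) ⊆ Π(y)` it is majorization. Conversely, if `x ∉ Π(y)`, a
linear functional `z ↦ ∑ c t * z t` separates `x` from `Π(y)`. Sorting `c` decreasingly, the
rearrangement inequality bounds its value at `x` by `∑ c↓ x↓`, Abel summation and majorization
bound that by `∑ c↓ y↓`, and this is its value at a vertex of `Π(y)`.
-/

theorem Finset.sum_range_mul_le_sum_range_mul_of_sum_range_le {n : ℕ} {c a b : ℕ → ℝ}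
    (hc : AntitoneOn c (Set.Iio n))
    (hab : ∀ k ≤ n, ∑ i ∈ range k, a i ≤ ∑ i ∈ range k, b i)
    (htot : ∑ i ∈ range n, a i = ∑ i ∈ range n, b i) :
    ∑ i ∈ range n, c i * a i ≤ ∑ i ∈ range n, c i * b i := by
  -- summation by parts for `b - a`; the boundary term vanishes by `htot`
  have hparts := sum_range_by_parts c (b - a) n
  simp only [smul_eq_mul, Pi.sub_apply, sum_sub_distrib, mul_sub, htot, sub_self, mul_zero,
    zero_sub] at hparts
  have hterms : ∑ i ∈ range (n - 1), (c (i + 1) - c i) *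
      (∑ j ∈ range (i + 1), b j - ∑ j ∈ range (i + 1), a j) ≤ 0 := by
    refine sum_nonpos fun i hi => mul_nonpos_of_nonpos_of_nonneg ?_ ?_
    · have hi : i + 1 < n := by rw [mem_range] at hi; omega
      exact sub_nonpos.2 (hc (Set.mem_Iio.2 (by omega)) (Set.mem_Iio.2 hi) (Nat.le_succ i))
    · exact sub_nonneg.2 (hab _ (by rw [mem_range] at hi; omega))
  simp only [mul_sub, sum_sub_distrib] at hterms
  linarith

theorem pSum_eq_sum_range {T : ℕ} (x : Fin T → ℝ) {s : ℕ} (hs : s ≤ T) :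
    pSum x s = ∑ i ∈ range s, if h : i < T then x ⟨i, h⟩ else 0 := by
  rw [pSum, sum_fin_eq_sum_range, ← sum_range_add_sum_Ico _ hs, sum_eq_zero (s := Ico s T),
    add_zero]
  · refine sum_congr rfl fun i hi => ?_
    have hi : i < s := mem_range.1 hi
    simp [hi, hi.trans_le hs]
  · intro i hi
    simp [(mem_Ico.1 hi).1]

theorem sum_mul_le_sum_mul_of_pSum_le {T : ℕ} {c a b : Fin T → ℝ} (hc : Antitone c)
    (hab : ∀ s ≤ T, pSum a s ≤ pSum b s) (htot : ∑ t, a t = ∑ t, b t) :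
    ∑ t, c t * a t ≤ ∑ t, c t * b t := by
  have hmul : ∀ v : Fin T → ℝ, ∑ t, c t * v t = ∑ i ∈ range T,
      (if h : i < T then c ⟨i, h⟩ else 0) * (if h : i < T then v ⟨i, h⟩ else 0) := by
    intro v
    rw [sum_fin_eq_sum_range]
    refine sum_congr rfl fun i hi => ?_
    simp [mem_range.1 hi]
  rw [hmul, hmul]
  refine sum_range_mul_le_sum_range_mul_of_sum_range_le ?_ (fun k hk => ?_) ?_
  · intro i hi j hj hij
    simp only [Set.mem_Iio] at hi hj
    simpa [hi, hj] using hc (Fin.mk_le_mk.2 hij)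
  · simpa only [pSum_eq_sum_range _ hk] using hab k hk
  · simpa only [sum_fin_eq_sum_range] using htot

theorem pSum_eq_sum_mul {T : ℕ} (x : Fin T → ℝ) (s : ℕ) :
    pSum x s = ∑ t : Fin T, (if (t : ℕ) < s then 1 else 0) * x t := by
  simp only [pSum, ite_mul, one_mul, zero_mul]

theorem pSum_comp_perm_le {T : ℕ} {x : Fin T → ℝ} (hx : Antitone x) (π : Equiv.Perm (Fin T))
    (s : ℕ) : pSum (x ∘ π) s ≤ pSum x s := by
  have hprefix : Antitone fun t : Fin T => if (t : ℕ) < s then (1 : ℝ) else 0 := by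
    intro i j hij
    dsimp only
    split_ifs <;> norm_num
    omega
  rw [pSum_eq_sum_mul, pSum_eq_sum_mul]
  exact (hprefix.monovary hx).sum_smul_comp_perm_le_sum_smul

theorem sum_mul_le_sum_comp_mul_comp {T : ℕ} {c x : Fin T → ℝ} {ρ σ : Equiv.Perm (Fin T)}
    (hc : Antitone (c ∘ ρ)) (hx : Antitone (x ∘ σ)) :
    ∑ t, c t * x t ≤ ∑ t, c (ρ t) * x (σ t) := by
  calc ∑ t, c t * x t = ∑ t, (c ∘ ρ) t • (x ∘ σ) ((σ⁻¹ * ρ) t) := by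
        rw [← Equiv.sum_comp ρ]
        simp
    _ ≤ ∑ t, c (ρ t) * x (σ t) := (hc.monovary hx).sum_smul_comp_perm_le_sum_smul

theorem self_mem_permSet {T : ℕ} (x : Fin T → ℝ) : x ∈ permSet x :=
  subset_convexHull ℝ _ ⟨1, rfl⟩

theorem permSet_subset_of_mem {T : ℕ} {x y : Fin T → ℝ} (h : x ∈ permSet y) :
    permSet x ⊆ permSet y := by
  refine convexHull_min ?_ (convex_convexHull ℝ _)
  rintro _ ⟨π, rfl⟩
  have hinv : LinearMap.funLeft ℝ ℝ π '' permSet y ⊆ permSet y := by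
    rw [permSet, LinearMap.image_convexHull]
    refine convexHull_mono ?_
    rintro _ ⟨_, ⟨π', rfl⟩, rfl⟩
    exact ⟨π' * π, rfl⟩
  exact hinv ⟨x, h, rfl⟩

theorem pSum_comp_le_of_mem_permSet {T : ℕ} {x y : Fin T → ℝ} {τ : Equiv.Perm (Fin T)}
    (hy : Antitone (y ∘ τ)) (hx : x ∈ permSet y) (σ : Equiv.Perm (Fin T)) (s : ℕ) :
    pSum (x ∘ σ) s ≤ pSum (y ∘ τ) s := by
  have hlin : IsLinearMap ℝ fun z : Fin T → ℝ => pSum (z ∘ σ) s := by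
    constructor <;> intros <;>
      simp only [pSum_eq_sum_mul, Function.comp_apply, Pi.add_apply, Pi.smul_apply, smul_eq_mul,
        mul_add, sum_add_distrib, mul_sum, mul_left_comm]
  refine convexHull_min ?_ (convex_halfSpace_le hlin _) hx
  rintro _ ⟨π, rfl⟩
  have hperm : (y ∘ π) ∘ σ = (y ∘ τ) ∘ ⇑(τ⁻¹ * π * σ) := by
    ext
    simp
  change pSum ((y ∘ π) ∘ σ) s ≤ _
  rw [hperm]
  exact pSum_comp_perm_le hy _ s

theorem mem_permSet_of_pSum_le {T : ℕ} {x y : Fin T → ℝ} {σ τ : Equiv.Perm (Fin T)}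
    (hx : Antitone (x ∘ σ)) (hsum : ∑ t, x t = ∑ t, y t)
    (hmaj : ∀ s ≤ T, pSum (x ∘ σ) s ≤ pSum (y ∘ τ) s) : x ∈ permSet y := by
  by_contra hxy
  have hfin : {z | ∃ π : Equiv.Perm (Fin T), z = y ∘ π}.Finite :=
    (Set.finite_range fun π : Equiv.Perm (Fin T) => y ∘ π).subset fun _ ⟨π, hπ⟩ => ⟨π, hπ.symm⟩
  obtain ⟨f, u, hfy, hfx⟩ := geometric_hahn_banach_closed_point (convex_convexHull ℝ _)
    (hfin.isClosed_convexHull (𝕜 := ℝ)) hxy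
  set c : Fin T → ℝ := fun t => f fun t' => if t = t' then 1 else 0
  have hf : ∀ z, f z = ∑ t, c t * z t := fun z => by
    simpa [c, mul_comm] using f.toLinearMap.pi_apply_eq_sum_univ z
  set ρ := Tuple.sort (-c)
  have hρ : Antitone (c ∘ ρ) := fun i j hij => neg_le_neg_iff.1 (Tuple.monotone_sort (-c) hij)
  have hvertex : y ∘ ⇑(τ * ρ⁻¹) ∈ permSet y := subset_convexHull ℝ _ ⟨_, rfl⟩
  have hle : f x ≤ f (y ∘ ⇑(τ * ρ⁻¹)) := calc
    f x = ∑ t, c t * x t := hf x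
    _ ≤ ∑ t, c (ρ t) * x (σ t) := sum_mul_le_sum_comp_mul_comp hρ hx
    _ ≤ ∑ t, c (ρ t) * y (τ t) :=
      sum_mul_le_sum_mul_of_pSum_le hρ hmaj (by simpa only [Function.comp_apply, Equiv.sum_comp])
    _ = f (y ∘ ⇑(τ * ρ⁻¹)) := by
      rw [hf, ← Equiv.sum_comp ρ fun t => c t * (y ∘ ⇑(τ * ρ⁻¹)) t]
      simp
  linarith [hfy _ hvertex]

theorem permSet_subset_iff_majorize (T : ℕ) (x y : Fin T → ℝ)
    (σ τ : Equiv.Perm (Fin T)) (hx : Antitone (x ∘ σ)) (hy : Antitone (y ∘ τ))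
    (hsum : ∑ t, x t = ∑ t, y t) :
    ((∀ s ≤ T, pSum (x ∘ σ) s ≤ pSum (y ∘ τ) s) → permSet x ⊆ permSet y) ∧
      (permSet x ⊆ permSet y → ∀ s ≤ T, pSum (x ∘ σ) s ≤ pSum (y ∘ τ) s) :=
  ⟨fun hmaj => permSet_subset_of_mem (mem_permSet_of_pSum_le hx hsum hmaj),
    fun hsub s _ => pSum_comp_le_of_mem_permSet hy (hsub (self_mem_permSet x)) σ s⟩
end

section
/- For monotone (nonincreasing) vectors x, y ∈ ℝ^T, the Minkowski sum of their permutahedra equals the permutahedron of their sum: Π(x) + Π(y) = Π(x + y). -/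
open Finset

/-!
A vertex `x ∘ π + y ∘ σ` of `Π(x) + Π(y)` is, up to permuting coordinates, `x + y ∘ τ` with
`τ = σ * π⁻¹`. If positions `p < q` carry an inversion of `τ`, then `x + y ∘ τ` and
`z = x + y ∘ (τ * swap p q)` differ only at `p` and `q`, and since `x` and `y` are both
antitone, `x + y ∘ τ` lies on the segment from `z` to `z ∘ swap p q`. Taking `p` the least
point moved by `τ` and `q = τ⁻¹ p` gives such an inversion with `τ * swap p q` moving fewer
points, so induction on the support of `τ` reduces everything to the vertex `x + y` of `Π(x + y)`.
-/

open Equiv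

theorem add_comp_mem_segment_swap {ι : Type*} [DecidableEq ι] {x y : ι → ℝ} {τ : Perm ι}
    {p q : ι} (hx : x q ≤ x p) (hy : y (τ p) ≤ y (τ q)) :
    x + y ∘ τ ∈ segment ℝ (x + y ∘ (τ * swap p q)) ((x + y ∘ (τ * swap p q)) ∘ swap p q) := by
  set a := x p - x q
  set b := y (τ q) - y (τ p)
  obtain ⟨θ, hθ₀, hθ₁, hθ⟩ : ∃ θ : ℝ, 0 ≤ θ ∧ θ ≤ 1 ∧ θ * (a + b) = b := by
    refine ⟨b / (a + b), div_nonneg (by linarith) (by linarith),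
      div_le_one_of_le₀ (by linarith) (by linarith), ?_⟩
    rcases eq_or_ne (a + b) 0 with h | h
    · rw [h, mul_zero]; linarith
    · exact div_mul_cancel₀ _ h
  rw [segment_eq_image]
  refine ⟨θ, ⟨hθ₀, hθ₁⟩, funext fun t => ?_⟩
  simp only [Pi.add_apply, Pi.smul_apply, Function.comp_apply, Perm.mul_apply, smul_eq_mul]
  rcases eq_or_ne t p with rfl | htp
  · simp only [swap_apply_left, swap_apply_right]; linear_combination -hθ
  rcases eq_or_ne t q with rfl | htq
  · simp only [swap_apply_left, swap_apply_right]; linear_combination hθ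
  · simp only [swap_apply_of_ne_of_ne htp htq]; ring

theorem comp_perm_mem_permSet {T : ℕ} (x : Fin T → ℝ) (π : Perm (Fin T)) : x ∘ π ∈ permSet x :=
  subset_convexHull ℝ _ ⟨π, rfl⟩

theorem comp_perm_mem_permSet_of_mem {T : ℕ} {x z : Fin T → ℝ} (hz : z ∈ permSet x)
    (π : Perm (Fin T)) : z ∘ π ∈ permSet x := by
  have hL := (LinearMap.funLeft ℝ ℝ π).image_convexHull {y | ∃ σ : Perm (Fin T), y = x ∘ σ}
  refine convexHull_mono ?_ (hL ▸ Set.mem_image_of_mem _ hz)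
  rintro _ ⟨_, ⟨σ, rfl⟩, rfl⟩
  exact ⟨π.trans σ, rfl⟩

theorem add_comp_perm_mem_permSet {T : ℕ} {x y : Fin T → ℝ} (hx : Antitone x) (hy : Antitone y)
    (τ : Perm (Fin T)) : x + y ∘ τ ∈ permSet (x + y) := by
  induction hn : τ.support.card using Nat.strong_induction_on generalizing τ with
  | _ n ih =>
  obtain rfl | hτ := eq_or_ne τ 1
  · exact comp_perm_mem_permSet (x + y) 1
  have hne : τ.support.Nonempty :=
    nonempty_iff_ne_empty.2 (mt Perm.support_eq_empty_iff.1 hτ)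
  set p := τ.support.min' hne
  set q := τ⁻¹ p
  have hτp : τ p ≠ p := Perm.mem_support.1 (min'_mem _ _)
  have hτq : τ q = p := τ.apply_symm_apply p
  have hqp : q ≠ p := fun h => hτp (h ▸ hτq)
  have hpq : p < q :=
    lt_of_le_of_ne (min'_le _ _ (Perm.mem_support.2 (hτq.trans_ne hqp.symm))) hqp.symm
  have hpτp : p < τ p :=
    lt_of_le_of_ne (min'_le _ _ (Perm.apply_mem_support.2 (min'_mem _ _))) hτp.symm
  have hcard : (τ * swap p q).support.card < n := calc
    _ = (swap p (τ⁻¹ p) * τ⁻¹).support.card := by rw [← Perm.support_inv, mul_inv_rev, swap_inv]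
    _ < τ⁻¹.support.card := Perm.card_support_swap_mul hqp
    _ = n := by rw [Perm.support_inv, hn]
  have hz := ih _ hcard _ rfl
  exact (convex_convexHull ℝ _).segment_subset hz (comp_perm_mem_permSet_of_mem hz _)
    (add_comp_mem_segment_swap (hx hpq.le) (hy (hτq ▸ hpτp.le)))

open Pointwise in
theorem permSet_add (T : ℕ) (x y : Fin T → ℝ) (hx : Antitone x) (hy : Antitone y) :
    permSet x + permSet y = permSet (x + y) := by
  rw [permSet, permSet, ← convexHull_add]
  apply Set.Subset.antisymm
  · refine convexHull_min ?_ (convex_convexHull ℝ _)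
    rintro _ ⟨_, ⟨π, rfl⟩, _, ⟨σ, rfl⟩, rfl⟩
    have hvertex : x ∘ π + y ∘ σ = (x + y ∘ (σ * π⁻¹)) ∘ π := by
      ext t; simp
    change x ∘ π + y ∘ σ ∈ _
    rw [hvertex]
    exact comp_perm_mem_permSet_of_mem (add_comp_perm_mem_permSet hx hy _) π
  · refine convexHull_mono ?_
    rintro _ ⟨π, rfl⟩
    exact ⟨x ∘ π, ⟨π, rfl⟩, y ∘ π, ⟨π, rfl⟩, rfl⟩
end

section
/- Robin Hood transfer inequality for fastest-charging profiles: for 0 ≤ e_i ≤ e_j, ι > 0 with e_j + ι ≤ mT, the vector sum v(e_i) + v(e_j + ι) is strongly majorized by v(e_i + ι) + v(e_j). -/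
open Finset

/-!
The partial sums of `v(e)` are `s ↦ min (m s) e`. Since `x ↦ min a x` is concave, moving the
extra charge `ι` from the larger energy `e_j` to the smaller `e_i` can only increase each
partial sum, and the totals agree because `min (m T) e = e` for every energy involved.
-/

lemma min_add_min_add_le {α : Type*} [AddCommGroup α] [LinearOrder α] [IsOrderedAddMonoid α]
    (a : α) {x y ι : α} (hxy : x ≤ y) (hι : 0 ≤ ι) :
    min a x + min a (y + ι) ≤ min a (x + ι) + min a y := by
  grind

lemma pSum_add {T : ℕ} (x y : Fin T → ℝ) (s : ℕ) :
    pSum (x + y) s = pSum x s + pSum y s := by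
  simp only [pSum, Pi.add_apply, ← Finset.sum_add_distrib, ite_add_ite, add_zero]

lemma vProf_apply_eq_min_sub_min {T : ℕ} {m : ℝ} (hm : 0 < m) (e : ℝ) (t : Fin T) :
    vProf T m e t = min (m * (t + 1)) e - min (m * t) e := by
  set k := ⌊e / m⌋
  have hk : m * k ≤ e := by
    rw [mul_comm, ← le_div_iff₀ hm]; exact Int.floor_le _
  have hk' : e < m * (k + 1) := by
    rw [mul_comm, ← div_lt_iff₀ hm]; exact Int.lt_floor_add_one _
  unfold vProf
  rcases lt_trichotomy (t : ℤ) k with h | h | h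
  · have h' : (t : ℝ) + 1 ≤ k := by exact_mod_cast h
    rw [if_pos h, min_eq_left (by nlinarith), min_eq_left (by nlinarith)]
    ring
  · have h' : (t : ℝ) = k := by exact_mod_cast h
    rw [if_neg h.not_lt, if_pos h, h', min_eq_right hk'.le, min_eq_left hk]
  · have h' : (k : ℝ) + 1 ≤ t := by exact_mod_cast h
    rw [if_neg (not_lt.mpr h.le), if_neg h.ne', min_eq_right (by nlinarith),
      min_eq_right (by nlinarith), sub_self]

lemma pSum_succ {T : ℕ} (x : Fin T → ℝ) {s : ℕ} (hs : s < T) :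
    pSum x (s + 1) = pSum x s + x ⟨s, hs⟩ := by
  have hsplit (t : Fin T) : (if (t : ℕ) < s + 1 then x t else 0) =
      (if (t : ℕ) < s then x t else 0) + if t = ⟨s, hs⟩ then x t else 0 := by
    rcases lt_trichotomy (t : ℕ) s with h | h | h
    · simp [Fin.ext_iff, h, h.trans (Nat.lt_succ_self s), h.ne]
    · simp [Fin.ext_iff, h]
    · simp [Fin.ext_iff, not_le.mpr h, not_lt.mpr h.le, h.ne']
  simp only [pSum, hsplit, Finset.sum_add_distrib, Finset.sum_ite_eq', Finset.mem_univ, if_true]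

lemma pSum_vProf {T : ℕ} {m e : ℝ} (hm : 0 < m) (he : 0 ≤ e) {s : ℕ} (hs : s ≤ T) :
    pSum (vProf T m e) s = min (m * s) e := by
  induction s with
  | zero => simp [pSum, he]
  | succ s ih =>
    rw [pSum_succ _ (by omega), ih (by omega), vProf_apply_eq_min_sub_min hm]
    push_cast
    ring

theorem robin_hood_vProf (T : ℕ) (m ei ej ι : ℝ) (hm : 0 < m)
    (hei : 0 ≤ ei) (hij : ei ≤ ej) (hι : 0 < ι) (hT : ej + ι ≤ m * T) :
    (∀ s ≤ T, pSum (vProf T m ei + vProf T m (ej + ι)) s ≤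
        pSum (vProf T m (ei + ι) + vProf T m ej) s) ∧
      pSum (vProf T m ei + vProf T m (ej + ι)) T =
        pSum (vProf T m (ei + ι) + vProf T m ej) T := by
  have hsums {s : ℕ} (hs : s ≤ T) :
      pSum (vProf T m ei + vProf T m (ej + ι)) s = min (m * s) ei + min (m * s) (ej + ι) ∧
        pSum (vProf T m (ei + ι) + vProf T m ej) s = min (m * s) (ei + ι) + min (m * s) ej := by
    simp only [pSum_add, pSum_vProf hm hei hs, pSum_vProf hm (by linarith : 0 ≤ ej + ι) hs,
      pSum_vProf hm (by linarith : 0 ≤ ei + ι) hs, pSum_vProf hm (hei.trans hij) hs, and_self]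
  refine ⟨fun s hs => ?_, ?_⟩
  · rw [(hsums hs).1, (hsums hs).2]
    exact min_add_min_add_le _ hij hι.le
  · rw [(hsums le_rfl).1, (hsums le_rfl).2, min_eq_right (by linarith), min_eq_right hT,
      min_eq_right (by linarith), min_eq_right (by linarith)]
    ring
end

section
/- Every point u of the flexibility set F = {u ∈ ℝ^T : 0 ≤ u_t ≤ m ∀t, ē_lower ≤ ∑ u_t ≤ ē_upper} with total energy e = ∑_t u_t lies in the permutahedron Π(v(e)), i.e., u is in the convex hull of permutations of v(e). -/
open Finset

/-!
The points of `[0, m]^T` with total `e` form a compact convex set, so by Krein–Milman it is the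
convex hull of its extreme points. An extreme point has at most one coordinate in `(0, m)`:
two such coordinates could exchange a small amount `ε` in either direction. Sorted decreasingly,
a box point with at most one fractional coordinate has `t`-th coordinate `max 0 (min m (e - m t))`,
which is exactly `v(e)`; hence every extreme point is a permutation of `v(e)`.
-/

section ExtremePoints

variable {𝕜 E : Type*} [Field 𝕜] [LinearOrder 𝕜] [IsStrictOrderedRing 𝕜] [AddCommGroup E]
  [Module 𝕜 E]

lemma eq_zero_of_add_mem_of_sub_mem_of_mem_extremePoints {K : Set E} {x d : E}
    (hx : x ∈ K.extremePoints 𝕜) (hadd : x + d ∈ K) (hsub : x - d ∈ K) : d = 0 := by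
  have hseg : x ∈ openSegment 𝕜 (x + d) (x - d) :=
    ⟨1 / 2, 1 / 2, by positivity, by positivity, add_halves 1, by
      rw [smul_add, smul_sub, add_add_sub_cancel, ← add_smul, add_halves, one_smul]⟩
  simpa using hx.2 hadd hsub hseg

end ExtremePoints

section KreinMilman

variable {E : Type*} [AddCommGroup E] [Module ℝ E] [TopologicalSpace E] [T2Space E]
  [IsTopologicalAddGroup E] [ContinuousSMul ℝ E] [LocallyConvexSpace ℝ E]

lemma IsCompact.subset_convexHull_of_extremePoints_subset {K S : Set E} (hK : IsCompact K)
    (hKc : Convex ℝ K) (hS : S.Finite) (hKS : K.extremePoints ℝ ⊆ S) : K ⊆ convexHull ℝ S :=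
  calc K = closure (convexHull ℝ (K.extremePoints ℝ)) :=
        (closure_convexHull_extremePoints hK hKc).symm
    _ ⊆ closure (convexHull ℝ S) := closure_mono (convexHull_mono hKS)
    _ = convexHull ℝ S := (hS.isClosed_convexHull ℝ).closure_eq

end KreinMilman

section BoxSlice

variable {ι : Type*} [Fintype ι]

def boxSlice (m e : ℝ) : Set (ι → ℝ) :=
  Set.univ.pi (fun _ => Set.Icc 0 m) ∩ {x | ∑ t, x t = e}

lemma convex_boxSlice (m e : ℝ) : Convex ℝ (boxSlice (ι := ι) m e) :=
  (convex_pi fun _ _ => convex_Icc 0 m).inter <|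
    convex_hyperplane ⟨fun _ _ => sum_add_distrib, fun _ _ => (mul_sum ..).symm⟩ e

lemma isCompact_boxSlice (m e : ℝ) : IsCompact (boxSlice (ι := ι) m e) :=
  (isCompact_univ_pi fun _ => isCompact_Icc).inter_right <|
    isClosed_eq (continuous_finsetSum _ fun t _ => continuous_apply t) continuous_const

lemma add_smul_single_sub_single_mem_boxSlice [DecidableEq ι] {m e : ℝ} {x : ι → ℝ}
    (hx : x ∈ boxSlice m e) {i j : ι} (hij : i ≠ j) {δ : ℝ} (hi : x i + δ ∈ Set.Icc 0 m)
    (hj : x j - δ ∈ Set.Icc 0 m) :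
    x + δ • (Pi.single i 1 - Pi.single j 1) ∈ boxSlice m e := by
  refine ⟨fun t _ => ?_, ?_⟩
  · rcases eq_or_ne t i with rfl | hti
    · simpa [hij] using hi
    rcases eq_or_ne t j with rfl | htj
    · simpa [hti, sub_eq_add_neg] using hj
    simpa [hti, htj] using hx.1 t trivial
  · simpa [sum_add_distrib, ← mul_sum, Pi.single_apply] using hx.2

lemma subsingleton_of_mem_extremePoints_boxSlice {m e : ℝ} {x : ι → ℝ}
    (hx : x ∈ (boxSlice m e).extremePoints ℝ) : {t | x t ∈ Set.Ioo 0 m}.Subsingleton := by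
  classical
  intro i hi j hj
  by_contra hij
  obtain ⟨hi0, him⟩ := hi
  obtain ⟨hj0, hjm⟩ := hj
  set ε := min (min (x i) (m - x i)) (min (x j) (m - x j))
  have hε : 0 < ε := lt_min (lt_min hi0 (by linarith)) (lt_min hj0 (by linarith))
  have h₁ : ε ≤ x i := (min_le_left _ _).trans (min_le_left _ _)
  have h₂ : ε ≤ m - x i := (min_le_left _ _).trans (min_le_right _ _)
  have h₃ : ε ≤ x j := (min_le_right _ _).trans (min_le_left _ _)
  have h₄ : ε ≤ m - x j := (min_le_right _ _).trans (min_le_right _ _)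
  have hadd := add_smul_single_sub_single_mem_boxSlice hx.1 hij (δ := ε)
    ⟨by linarith, by linarith⟩ ⟨by linarith, by linarith⟩
  have hsub := add_smul_single_sub_single_mem_boxSlice hx.1 hij (δ := -ε)
    ⟨by linarith, by linarith⟩ ⟨by linarith, by linarith⟩
  rw [neg_smul, ← sub_eq_add_neg] at hsub
  have hε0 : ε = 0 := by
    simpa [hij] using congrFun (eq_zero_of_add_mem_of_sub_mem_of_mem_extremePoints hx hadd hsub) i
  exact hε.ne' hε0

end BoxSlice

lemma sum_eq_sum_Iio_add_add_sum_Ioi {α M : Type*} [Fintype α] [LinearOrder α]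
    [LocallyFiniteOrderBot α] [LocallyFiniteOrderTop α] [AddCommMonoid M] (f : α → M) (a : α) :
    ∑ b, f b = ∑ b ∈ Iio a, f b + f a + ∑ b ∈ Ioi a, f b := by
  rw [sum_Iio_add_eq_sum_Iic, ← sum_union (disjoint_left.2 fun b h₁ h₂ =>
    (mem_Iic.1 h₁).not_gt (mem_Ioi.1 h₂))]
  congr
  ext b
  simpa using le_or_gt b a

lemma vProf_eq_max_min {T : ℕ} {m : ℝ} (hm : 0 < m) (e : ℝ) (t : Fin T) :
    vProf T m e t = max 0 (min m (e - m * t)) := by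
  have hlo : m * ⌊e / m⌋ ≤ e := by
    rw [mul_comm, ← le_div_iff₀ hm]; exact Int.floor_le _
  have hhi : e < m * (⌊e / m⌋ + 1) := by
    rw [mul_comm, ← div_lt_iff₀ hm]; exact Int.lt_floor_add_one _
  unfold vProf
  split_ifs with hlt heq
  · have : (t : ℝ) + 1 ≤ ⌊e / m⌋ := by exact_mod_cast hlt
    rw [min_eq_left (by nlinarith), max_eq_right hm.le]
  · have : (t : ℝ) = ⌊e / m⌋ := by exact_mod_cast heq
    rw [this, min_eq_right (by linarith), max_eq_right (by linarith)]
  · have : (⌊e / m⌋ : ℝ) + 1 ≤ t := by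
      exact_mod_cast (by omega : ⌊e / m⌋ + 1 ≤ ((t : ℕ) : ℤ))
    rw [max_eq_left (min_le_of_right_le (by nlinarith))]

lemma Antitone.eq_max_min_of_subsingleton {T : ℕ} {m : ℝ} {y : Fin T → ℝ} (hy : Antitone y)
    (hbox : ∀ t, y t ∈ Set.Icc 0 m) (hfrac : {t | y t ∈ Set.Ioo 0 m}.Subsingleton) (t : Fin T) :
    y t = max 0 (min m (∑ s, y s - m * t)) := by
  have hbefore : 0 < y t → ∀ s ∈ Iio t, y s = m := by
    intro ht s hs
    have hst : y t ≤ y s := hy (mem_Iio.1 hs).le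
    by_contra hne
    have hs_frac : y s ∈ Set.Ioo 0 m := ⟨ht.trans_le hst, lt_of_le_of_ne (hbox s).2 hne⟩
    have ht_frac : y t ∈ Set.Ioo 0 m := ⟨ht, hst.trans_lt hs_frac.2⟩
    exact (mem_Iio.1 hs).ne (hfrac hs_frac ht_frac)
  have hafter : y t < m → ∀ s ∈ Ioi t, y s = 0 := by
    intro ht s hs
    have hst : y s ≤ y t := hy (mem_Ioi.1 hs).le
    by_contra hne
    have hs_frac : y s ∈ Set.Ioo 0 m :=
      ⟨lt_of_le_of_ne (hbox s).1 (Ne.symm hne), hst.trans_lt ht⟩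
    have ht_frac : y t ∈ Set.Ioo 0 m := ⟨hs_frac.1.trans_le hst, ht⟩
    exact (mem_Ioi.1 hs).ne (hfrac ht_frac hs_frac)
  rw [sum_eq_sum_Iio_add_add_sum_Ioi y t]
  rcases (hbox t).1.eq_or_lt with hzero | hpos
  · have hIoi : ∑ s ∈ Ioi t, y s = 0 := sum_eq_zero fun s hs =>
      le_antisymm (hzero ▸ hy (mem_Ioi.1 hs).le) (hbox s).1
    have hIio_le : ∑ s ∈ Iio t, y s ≤ m * t := by
      simpa [mul_comm] using sum_le_card_nsmul (Iio t) y m fun s _ => (hbox s).2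
    rw [hIoi, ← hzero, max_eq_left (min_le_of_right_le (by linarith))]
  have hIio : ∑ s ∈ Iio t, y s = m * t := by
    rw [sum_congr rfl (hbefore hpos), sum_const, Fin.card_Iio, nsmul_eq_mul, mul_comm]
  rw [hIio]
  rcases (hbox t).2.eq_or_lt with hfull | hlt
  · have hIoi_nonneg : 0 ≤ ∑ s ∈ Ioi t, y s := sum_nonneg fun s _ => (hbox s).1
    rw [hfull, min_eq_left (by linarith), max_eq_right (by linarith)]
  · rw [sum_eq_zero (hafter hlt), min_eq_right (by linarith), max_eq_right (by linarith)]
    ring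

lemma exists_perm_eq_vProf_comp {T : ℕ} {m e : ℝ} (hm : 0 < m) {x : Fin T → ℝ}
    (hx : x ∈ boxSlice m e) (hfrac : {t | x t ∈ Set.Ioo 0 m}.Subsingleton) :
    ∃ π : Equiv.Perm (Fin T), x = vProf T m e ∘ π := by
  set σ := Tuple.sort (OrderDual.toDual ∘ x)
  have hanti : Antitone (x ∘ σ) := Tuple.monotone_sort (OrderDual.toDual ∘ x)
  have hsorted : x ∘ σ = vProf T m e := by
    funext t
    rw [vProf_eq_max_min hm, ← hx.2, ← Equiv.sum_comp σ x]
    exact hanti.eq_max_min_of_subsingleton (fun s => hx.1 (σ s) trivial)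
      (hfrac.preimage σ.injective) t
  exact ⟨σ.symm, by rw [← hsorted, Function.comp_assoc, σ.self_comp_symm, Function.comp_id]⟩

theorem flexSet_mem_permSet_general (T : ℕ) (m : ℝ) (hm : 0 < m)
    (u : Fin T → ℝ) (hu : ∀ t, 0 ≤ u t ∧ u t ≤ m) :
    u ∈ permSet (vProf T m (∑ t, u t)) := by
  set v := vProf T m (∑ t, u t)
  have hvertices : (boxSlice m (∑ t, u t)).extremePoints ℝ ⊆
      {y | ∃ π : Equiv.Perm (Fin T), y = v ∘ π} := fun x hx =>
    exists_perm_eq_vProf_comp hm hx.1 (subsingleton_of_mem_extremePoints_boxSlice hx)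
  have hfinite : {y | ∃ π : Equiv.Perm (Fin T), y = v ∘ π}.Finite :=
    (Set.finite_range fun π : Equiv.Perm (Fin T) => v ∘ π).subset fun _ ⟨π, h⟩ => ⟨π, h.symm⟩
  exact (isCompact_boxSlice _ _).subset_convexHull_of_extremePoints_subset
    (convex_boxSlice _ _) hfinite hvertices ⟨fun t _ => hu t, rfl⟩

theorem flexSet_mem_permSet (T : ℕ) (m el eu : ℝ) (hm : 0 < m)
    (h0 : 0 ≤ el) (hle : el ≤ eu) (heu : eu ≤ m * T)
    (u : Fin T → ℝ) (hu : ∀ t, 0 ≤ u t ∧ u t ≤ m)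
    (hl : el ≤ ∑ t, u t) (hh : ∑ t, u t ≤ eu) :
    u ∈ permSet (vProf T m (∑ t, u t)) :=
  flexSet_mem_permSet_general T m hm u hu
end

section
/- F(ξ) equals the convex hull of the points {w_t^π(ξ) : t ∈ {0,...,T}, π ∈ S_T}, where w_{t,s}(ξ) = v_s(ē_lower) if t < s and w_{t,s}(ξ) = v_s(ē_upper) if t ≥ s. -/
/-!
`F(ξ)` is a compact convex set, so by Krein–Milman it is the closed convex hull of its extreme
points, while every `w_t ∘ π` lies in `F(ξ)` because `v(el) ≤ w_t ≤ v(eu)` coordinatewise.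
At an extreme point `u` at most one coordinate is fractional (otherwise shift mass between two
of them), and if one is, the total `∑ u` equals `el` or `eu` (otherwise move that coordinate
alone). Sorted decreasingly, such a `u` is the fastest-charging profile `v(∑ u)`, which is
`w_0 = v(el)`, `w_T = v(eu)`, or, when `∑ u = k` is an integer in `[el, eu]`, `w_k`.
-/

open Finset

/-- Vertex generators `w_t` for the individual flexibility set (m = 1):
coordinate `s` (0-based) equals `v_s(el)` when (1-based) `t < s`, i.e. `t ≤ s`
in 0-based terms, and `v_s(eu)` when `t ≥ s`. -/
noncomputable def wVert (T : ℕ) (el eu : ℝ) (t : Fin (T + 1)) : Fin T → ℝ :=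
  fun s => if (t : ℕ) ≤ (s : ℕ) then vProf T 1 el s else vProf T 1 eu s

section vProf

variable {T : ℕ} {e e' : ℝ} {s : Fin T}

lemma vProf_one_apply : vProf T 1 e s = min e (s + 1) - min e s := by
  simp only [vProf, div_one, one_mul]
  rcases lt_trichotomy ((s : ℕ) : ℤ) ⌊e⌋ with h | h | h
  · have : (s : ℝ) + 1 ≤ e := by exact_mod_cast Int.le_floor.1 (Int.add_one_le_iff.2 h)
    rw [if_pos h, min_eq_right this, min_eq_right (by linarith)]
    ring
  · obtain ⟨h₁, h₂⟩ := Int.floor_eq_iff.1 h.symm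
    push_cast at h₁ h₂
    rw [if_neg h.not_lt, if_pos h, ← h, min_eq_left h₂.le, min_eq_right h₁]
    push_cast
    ring
  · have : e < s := by exact_mod_cast Int.floor_lt.1 h
    rw [if_neg (by omega), if_neg (by omega), min_eq_left (by linarith), min_eq_left this.le]
    ring

lemma vProf_one_of_add_one_le (h : (s : ℝ) + 1 ≤ e) : vProf T 1 e s = 1 := by
  rw [vProf_one_apply, min_eq_right h, min_eq_right (by linarith)]
  ring

lemma vProf_one_of_le (h : e ≤ s) : vProf T 1 e s = 0 := by
  rw [vProf_one_apply, min_eq_left h, min_eq_left (by linarith), sub_self]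

lemma vProf_one_of_le_of_le (h₁ : (s : ℝ) ≤ e) (h₂ : e ≤ s + 1) : vProf T 1 e s = e - s := by
  rw [vProf_one_apply, min_eq_left h₂, min_eq_right h₁]

lemma vProf_one_mem_Icc : vProf T 1 e s ∈ Set.Icc 0 1 := by
  rw [vProf_one_apply]
  constructor <;> cases min_cases e ((s : ℝ) + 1) <;> cases min_cases e (s : ℝ) <;> linarith

lemma vProf_one_mono (h : e ≤ e') : vProf T 1 e s ≤ vProf T 1 e' s := by
  rw [vProf_one_apply, vProf_one_apply]
  cases min_cases e ((s : ℝ) + 1) <;> cases min_cases e (s : ℝ) <;>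
    cases min_cases e' ((s : ℝ) + 1) <;> cases min_cases e' (s : ℝ) <;> linarith

lemma sum_vProf_one (h₀ : 0 ≤ e) (hT : e ≤ T) : ∑ s, vProf T 1 e s = e := by
  have := sum_range_sub (fun i : ℕ => min e (i : ℝ)) T
  push_cast at this
  simp only [vProf_one_apply]
  rw [Fin.sum_univ_eq_sum_range (fun i : ℕ => min e ((i : ℝ) + 1) - min e (i : ℝ)), this,
    min_eq_left hT, min_eq_right h₀, sub_zero]

end vProf

section wVert

variable {T : ℕ} {el eu : ℝ}

lemma wVert_mem_Icc (hle : el ≤ eu) (t : Fin (T + 1)) (s : Fin T) :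
    wVert T el eu t s ∈ Set.Icc (vProf T 1 el s) (vProf T 1 eu s) := by
  unfold wVert
  split
  · exact ⟨le_rfl, vProf_one_mono hle⟩
  · exact ⟨vProf_one_mono hle, le_rfl⟩

lemma wVert_zero : wVert T el eu 0 = vProf T 1 el :=
  funext fun _ => if_pos (Nat.zero_le _)

lemma wVert_last : wVert T el eu (Fin.last T) = vProf T 1 eu :=
  funext fun s => if_neg (by simp)

lemma wVert_eq_vProf_one (t : Fin (T + 1)) (hl : el ≤ t) (hu : t ≤ eu) :
    wVert T el eu t = vProf T 1 t := by
  funext s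
  unfold wVert
  split
  case isTrue h =>
    have : ((t : ℕ) : ℝ) ≤ s := by exact_mod_cast h
    rw [vProf_one_of_le (hl.trans this), vProf_one_of_le this]
  case isFalse h =>
    have : (s : ℝ) + 1 ≤ ((t : ℕ) : ℝ) := by exact_mod_cast (not_le.1 h)
    rw [vProf_one_of_add_one_le (this.trans hu), vProf_one_of_add_one_le this]

end wVert

def flexSet (T : ℕ) (el eu : ℝ) : Set (Fin T → ℝ) :=
  Set.Icc 0 1 ∩ (fun u => ∑ t, u t) ⁻¹' Set.Icc el eu

section flexSet

variable {T : ℕ} {el eu : ℝ} {u d : Fin T → ℝ}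

lemma mem_flexSet :
    u ∈ flexSet T el eu ↔ (∀ t, 0 ≤ u t ∧ u t ≤ 1) ∧ el ≤ ∑ t, u t ∧ ∑ t, u t ≤ eu := by
  simp [flexSet, Pi.le_def, forall_and]

lemma convex_flexSet : Convex ℝ (flexSet T el eu) :=
  (convex_Icc 0 1).inter <| (convex_Icc el eu).is_linear_preimage <|
    IsLinearMap.mk (fun u v => by simp [sum_add_distrib]) (fun c u => by simp [mul_sum])

lemma isCompact_flexSet : IsCompact (flexSet T el eu) :=
  isCompact_Icc.inter_right (isClosed_Icc.preimage (by fun_prop))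

lemma comp_perm_mem_flexSet (hu : u ∈ flexSet T el eu) (π : Equiv.Perm (Fin T)) :
    u ∘ π ∈ flexSet T el eu := by
  rw [mem_flexSet] at hu ⊢
  simpa only [Function.comp_apply, Equiv.sum_comp π u] using ⟨fun t => hu.1 (π t), hu.2⟩

lemma wVert_mem_flexSet (h₀ : 0 ≤ el) (hle : el ≤ eu) (heu : eu ≤ T) (t : Fin (T + 1)) :
    wVert T el eu t ∈ flexSet T el eu := by
  have hw := wVert_mem_Icc hle t
  refine mem_flexSet.2 ⟨fun s => ⟨?_, ?_⟩, ?_, ?_⟩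
  · exact vProf_one_mem_Icc.1.trans (hw s).1
  · exact (hw s).2.trans vProf_one_mem_Icc.2
  · calc el = ∑ s, vProf T 1 el s := (sum_vProf_one h₀ (hle.trans heu)).symm
      _ ≤ ∑ s, wVert T el eu t s := sum_le_sum fun s _ => (hw s).1
  · calc ∑ s, wVert T el eu t s ≤ ∑ s, vProf T 1 eu s := sum_le_sum fun s _ => (hw s).2
      _ = eu := sum_vProf_one (h₀.trans hle) heu

lemma add_mem_flexSet (hd : ∀ t, |d t| ≤ u t ∧ |d t| ≤ 1 - u t)
    (hsum : |∑ t, d t| ≤ ∑ t, u t - el ∧ |∑ t, d t| ≤ eu - ∑ t, u t) :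
    u + d ∈ flexSet T el eu := by
  refine mem_flexSet.2 ⟨fun t => ?_, ?_⟩
  · simp only [Pi.add_apply]
    constructor <;> linarith [hd t, neg_abs_le (d t), le_abs_self (d t)]
  · simp only [Pi.add_apply, sum_add_distrib]
    constructor <;> linarith [neg_abs_le (∑ t, d t), le_abs_self (∑ t, d t)]

end flexSet

lemma eq_zero_of_mem_extremePoints_of_add_mem_of_sub_mem {𝕜 E : Type*} [Field 𝕜] [LinearOrder 𝕜]
    [IsStrictOrderedRing 𝕜] [AddCommGroup E] [Module 𝕜 E] {A : Set E} {x d : E}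
    (hx : x ∈ A.extremePoints 𝕜) (h₁ : x + d ∈ A) (h₂ : x - d ∈ A) : d = 0 :=
  add_eq_left.1 <| hx.2 h₁ h₂ ⟨1 / 2, 1 / 2, by norm_num, by norm_num, by norm_num, by module⟩

section extremePoints

variable {T : ℕ} {el eu : ℝ} {u d : Fin T → ℝ}

lemma eq_zero_of_mem_extremePoints_flexSet (hu : u ∈ (flexSet T el eu).extremePoints ℝ)
    (hd : ∀ t, |d t| ≤ u t ∧ |d t| ≤ 1 - u t)
    (hsum : |∑ t, d t| ≤ ∑ t, u t - el ∧ |∑ t, d t| ≤ eu - ∑ t, u t) : d = 0 := by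
  refine eq_zero_of_mem_extremePoints_of_add_mem_of_sub_mem hu (add_mem_flexSet hd hsum) ?_
  rw [sub_eq_add_neg]
  exact add_mem_flexSet (by simpa using hd) (by simpa [sum_neg_distrib] using hsum)

lemma subsingleton_setOf_mem_Ioo_of_mem_extremePoints_flexSet
    (hu : u ∈ (flexSet T el eu).extremePoints ℝ) : {i | u i ∈ Set.Ioo 0 1}.Subsingleton := by
  obtain ⟨hbox, hel, heu⟩ := mem_flexSet.1 hu.1
  rintro i ⟨hi₀, hi₁⟩ j ⟨hj₀, hj₁⟩
  by_contra hij
  set ε := min (min (u i) (1 - u i)) (min (u j) (1 - u j))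
  have hε : 0 < ε := lt_min (lt_min hi₀ (by linarith)) (lt_min hj₀ (by linarith))
  have hd := eq_zero_of_mem_extremePoints_flexSet (d := Pi.single i ε - Pi.single j ε) hu
    (fun t => by
      simp only [Pi.sub_apply, Pi.single_apply]
      split_ifs <;> simp_all [abs_of_pos hε, ε])
    (by simpa [sum_sub_distrib] using ⟨hel, heu⟩)
  simpa [Ne.symm hij, hε.ne'] using congrFun hd i

lemma sum_eq_or_sum_eq_of_mem_extremePoints_flexSet
    (hu : u ∈ (flexSet T el eu).extremePoints ℝ) {i : Fin T} (hi : u i ∈ Set.Ioo 0 1) :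
    ∑ t, u t = el ∨ ∑ t, u t = eu := by
  obtain ⟨hbox, hel, heu⟩ := mem_flexSet.1 hu.1
  by_contra! h
  set ε := min (min (u i) (1 - u i)) (min (∑ t, u t - el) (eu - ∑ t, u t))
  have hε : 0 < ε := lt_min (lt_min hi.1 (by linarith [hi.2]))
    (lt_min (by linarith [hel.lt_of_ne' h.1]) (by linarith [heu.lt_of_ne h.2]))
  have hd := eq_zero_of_mem_extremePoints_flexSet (d := Pi.single i ε) hu
    (fun t => by
      simp only [Pi.single_apply]
      split_ifs <;> simp_all [abs_of_pos hε, ε])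
    (by simp [abs_of_pos hε, ε])
  simpa [hε.ne'] using congrFun hd i

end extremePoints

lemma exists_perm_antitone_comp {n : ℕ} {α : Type*} [LinearOrder α] (f : Fin n → α) :
    ∃ σ : Equiv.Perm (Fin n), Antitone (f ∘ σ) :=
  ⟨Fin.revPerm.trans (Tuple.sort f), (Tuple.monotone_sort f).comp_antitone Fin.rev_anti⟩

lemma eq_vProf_one_sum_of_antitone {T : ℕ} {w : Fin T → ℝ} (hw : Antitone w)
    (hbox : ∀ i, w i ∈ Set.Icc 0 1) (hfrac : {i | w i ∈ Set.Ioo 0 1}.Subsingleton) :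
    w = vProf T 1 (∑ i, w i) := by
  funext s
  rcases (hbox s).1.eq_or_lt with h₀ | h₀
  · have hvanish : ∀ j ∉ Iio s, w j = 0 := fun j hj =>
      le_antisymm (h₀ ▸ hw (not_lt.1 (by simpa using hj))) (hbox j).1
    have : ∑ i, w i ≤ s :=
      calc ∑ i, w i = ∑ i ∈ Iio s, w i := (sum_subset (subset_univ _) fun j _ => hvanish j).symm
        _ ≤ ∑ i ∈ Iio s, 1 := sum_le_sum fun i _ => (hbox i).2
        _ = s := by simp
    rw [← h₀, vProf_one_of_le this]
  rcases (hbox s).2.eq_or_lt with h₁ | h₁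
  · have : (s : ℝ) + 1 ≤ ∑ i, w i :=
      calc (s : ℝ) + 1 = ∑ i ∈ Iic s, 1 := by simp
        _ = ∑ i ∈ Iic s, w i :=
          sum_congr rfl fun j hj => (le_antisymm (hbox j).2 (h₁ ▸ hw (mem_Iic.1 hj))).symm
        _ ≤ ∑ i, w i := sum_le_sum_of_subset_of_nonneg (subset_univ _) fun i _ _ => (hbox i).1
    rw [h₁, vProf_one_of_add_one_le this]
  have hlt : ∀ j ∈ Iio s, w j = 1 := fun j hj => by
    have hjs : j < s := mem_Iio.1 hj
    by_contra hne
    exact hjs.ne (hfrac ⟨h₀.trans_le (hw hjs.le), (hbox j).2.lt_of_ne hne⟩ ⟨h₀, h₁⟩)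
  have hgt : ∀ j ∉ Iic s, w j = 0 := fun j hj => by
    have hsj : s < j := by simpa using hj
    by_contra hne
    exact hsj.ne' (hfrac ⟨(hbox j).1.lt_of_ne' hne, (hw hsj.le).trans_lt h₁⟩ ⟨h₀, h₁⟩)
  have hsum : ∑ i, w i = s + w s := by
    rw [← sum_subset (subset_univ (Iic s)) fun j _ => hgt j, ← Iio_insert,
      sum_insert (by simp), sum_congr rfl hlt]
    simp [add_comm]
  rw [vProf_one_of_le_of_le (by linarith) (by linarith), hsum]
  ring

lemma exists_perm_eq_vProf_one_sum_comp {T : ℕ} {u : Fin T → ℝ} (hbox : ∀ i, u i ∈ Set.Icc 0 1)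
    (hfrac : {i | u i ∈ Set.Ioo 0 1}.Subsingleton) :
    ∃ π : Equiv.Perm (Fin T), u = vProf T 1 (∑ i, u i) ∘ π := by
  obtain ⟨σ, hσ⟩ := exists_perm_antitone_comp u
  have h := eq_vProf_one_sum_of_antitone hσ (fun i => hbox (σ i)) (hfrac.preimage σ.injective)
  rw [Function.comp_def, Equiv.sum_comp σ u] at h
  refine ⟨σ.symm, funext fun i => ?_⟩
  simpa using congrFun h (σ.symm i)

lemma extremePoints_flexSet_subset {T : ℕ} {el eu : ℝ} :
    (flexSet T el eu).extremePoints ℝ ⊆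
      {y | ∃ (t : Fin (T + 1)) (π : Equiv.Perm (Fin T)), y = (wVert T el eu t) ∘ π} := by
  intro u hu
  obtain ⟨hbox, hel, heu⟩ := mem_flexSet.1 hu.1
  obtain ⟨π, hπ⟩ := exists_perm_eq_vProf_one_sum_comp hbox
    (subsingleton_setOf_mem_Ioo_of_mem_extremePoints_flexSet hu)
  suffices ∃ t, wVert T el eu t = vProf T 1 (∑ i, u i) from
    let ⟨t, ht⟩ := this; ⟨t, π, by rw [ht]; exact hπ⟩
  by_cases hfrac : ∃ i, u i ∈ Set.Ioo 0 1
  · obtain ⟨i, hi⟩ := hfrac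
    rcases sum_eq_or_sum_eq_of_mem_extremePoints_flexSet hu hi with h | h
    · exact ⟨0, h ▸ wVert_zero⟩
    · exact ⟨Fin.last T, h ▸ wVert_last⟩
  have hbool : ∀ i, u i = if u i = 1 then 1 else 0 := fun i => by
    split_ifs with h
    · exact h
    · exact le_antisymm (not_lt.1 fun hpos => hfrac ⟨i, hpos, (hbox i).2.lt_of_ne h⟩) (hbox i).1
  set k := #{i | u i = 1}
  have hk : ∑ i, u i = k := by
    rw [sum_congr rfl fun i _ => hbool i, sum_boole]
  have hkT : k < T + 1 := Nat.lt_succ_of_le ((card_filter_le _ _).trans (card_fin T).le)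
  exact ⟨⟨k, hkT⟩, by rw [hk]; exact wVert_eq_vProf_one ⟨k, hkT⟩ (hk ▸ hel) (hk ▸ heu)⟩

theorem flexSet_eq_convexHull_wVert (T : ℕ) (el eu : ℝ)
    (h0 : 0 ≤ el) (hle : el ≤ eu) (heu : eu ≤ (T : ℝ)) :
    {u : Fin T → ℝ | (∀ t, 0 ≤ u t ∧ u t ≤ 1) ∧ el ≤ ∑ t, u t ∧ ∑ t, u t ≤ eu} =
      convexHull ℝ {y | ∃ (t : Fin (T + 1)) (π : Equiv.Perm (Fin T)),
        y = (wVert T el eu t) ∘ π} := by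
  set G := {y | ∃ (t : Fin (T + 1)) (π : Equiv.Perm (Fin T)), y = (wVert T el eu t) ∘ π}
  have hGF : G ⊆ flexSet T el eu := by
    rintro _ ⟨t, π, rfl⟩
    exact comp_perm_mem_flexSet (wVert_mem_flexSet h0 hle heu t) π
  have hG : G.Finite := (Set.finite_range fun p : Fin (T + 1) × Equiv.Perm (Fin T) =>
    wVert T el eu p.1 ∘ p.2).subset fun _ ⟨t, π, hy⟩ => ⟨(t, π), hy.symm⟩
  rw [show {u : Fin T → ℝ | _} = flexSet T el eu from Set.ext fun _ => mem_flexSet.symm]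
  refine (convexHull_min hGF convex_flexSet).antisymm' ?_
  calc flexSet T el eu = closure (convexHull ℝ ((flexSet T el eu).extremePoints ℝ)) :=
        (closure_convexHull_extremePoints isCompact_flexSet convex_flexSet).symm
    _ ⊆ closure (convexHull ℝ G) := closure_mono (convexHull_mono extremePoints_flexSet_subset)
    _ = convexHull ℝ G := (hG.isClosed_convexHull ℝ).closure_eq
end
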